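/- arXiv:2302.02342 — 6 statements merged into one kernel-verified Lean document; each statement's English description precedes it below -/
import Mathlib

section
/- Let η be a nonempty partition. Then the parts of η^c are given by: η^c_i = η_i − 1 if i ≤ d̃(η), η^c_{d̃(η)+1} = d(η) − 1, and η^c_i = η_{i−1} if i > d̃(η) + 1. -/
/-- A partition `η`, given by its parts `η.part i` for `i ≥ 1` (indexed from 1;
by convention `part 0 = part 1`), weakly decreasing and eventually zero. -/
structure PartitionSeq where
  part : ℕ → ℕ
  antitone : ∀ ⦃i j : ℕ⦄, i ≤ j → part j ≤ part i
  exists_zero : ∃ N, part N = 0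
  head : part 0 = part 1

namespace PartitionSeq

/-- The Maya diagram of `η` in the ℤ-model: an integer `t` represents the
half-integer `t + 1/2`, so `mayaZ η` encodes `S(η) = {η_i − i + 1/2 | i ≥ 1}`. -/
def mayaZ (η : PartitionSeq) : Set ℤ := {t | ∃ i : ℕ, 1 ≤ i ∧ t = (η.part i : ℤ) - (i : ℤ)}

/-- `ℓ(η)`: the number of nonzero parts. -/
noncomputable def len (η : PartitionSeq) : ℕ := sSup {i | η.part i ≠ 0}

/-- `d(η) = max {i : η_i ≥ i}` (Durfee square size), `0` for the empty partition. -/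
noncomputable def durfee (η : PartitionSeq) : ℕ := sSup {i | i ≤ η.part i}

/-- `d̃(η) = max {i : η_i ≥ d(η)}`. -/
noncomputable def dtil (η : PartitionSeq) : ℕ := sSup {i | η.durfee ≤ η.part i}

/-- `min S⁺`: the least element of `S` representing a positive half-integer. -/
noncomputable def minPos (S : Set ℤ) : ℤ := sInf {t | t ∈ S ∧ 0 ≤ t}

/-- `max S⁻`: the greatest element not in `S` representing a negative half-integer. -/
noncomputable def maxNeg (S : Set ℤ) : ℤ := sSup {t | t ∉ S ∧ t < 0}

/-- `ηr = η^r`: defined by `S(η^r) = {t+1 | t ∈ S(η) \ {min S(η)⁺}}`. -/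
def IsR (η ηr : PartitionSeq) : Prop :=
  mayaZ ηr = (fun t => t + 1) '' (mayaZ η \ {minPos (mayaZ η)})

/-- `ηc = η^c`: defined by `S(η^c) = {t−1 | t ∈ S(η) ∪ {max S(η)⁻}}`. -/
def IsC (η ηc : PartitionSeq) : Prop :=
  mayaZ ηc = (fun t => t - 1) '' (mayaZ η ∪ {maxNeg (mayaZ η)})

/-- `ηrc = η^{rc}`: defined by `S(η^{rc}) = (S(η) \ {min S(η)⁺}) ∪ {max S(η)⁻}`. -/
def IsRC (η ηrc : PartitionSeq) : Prop :=
  mayaZ ηrc = (mayaZ η \ {minPos (mayaZ η)}) ∪ {maxNeg (mayaZ η)}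

/-- `ηc = η′` is the conjugate partition: `η′_j = |{i ≥ 1 : η_i ≥ j}|`. -/
def IsConj (η ηc : PartitionSeq) : Prop :=
  ∀ j : ℕ, 1 ≤ j → ηc.part j = Set.ncard {i : ℕ | 1 ≤ i ∧ j ≤ η.part i}

/-- `|η|`: the sum of the parts. -/
noncomputable def size (η : PartitionSeq) : ℕ := ∑ i ∈ Finset.Icc 1 η.len, η.part i

end PartitionSeq

/-!
The Maya diagram of `η` is the range of the strictly decreasing sequence `i ↦ η_i − i`, and a
strictly decreasing sequence is determined by its range. As `η_i ≥ d` exactly for `i ≤ d̃`, and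
`η_i = d` for `d < i ≤ d̃`, the diagram contains `[d − d̃, −1]` but not `d − d̃ − 1`, so
`max S(η)⁻ = d − d̃ − 1`, which lies strictly between the `(d̃+1)`-st and the `d̃`-th term. Hence the
sequence of `η^c` is that of `η` shifted by `−1` with `d − d̃ − 2` inserted at position `d̃ + 1`,
and the parts of `η^c` can be read off.
-/

def insertAt {α : Type*} (a : ℕ → α) (k : ℕ) (x : α) (i : ℕ) : α :=
  if i < k then a i else if i = k then x else a (i - 1)

lemma range_insertAt {α : Type*} (a : ℕ → α) (k : ℕ) (x : α) :
    Set.range (insertAt a k x) = insert x (Set.range a) := by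
  ext t
  constructor
  · rintro ⟨i, rfl⟩
    unfold insertAt
    split_ifs
    · exact Or.inr ⟨i, rfl⟩
    · exact Or.inl rfl
    · exact Or.inr ⟨i - 1, rfl⟩
  · rintro (rfl | ⟨j, rfl⟩)
    · exact ⟨k, by simp [insertAt]⟩
    · rcases lt_or_ge j k with hj | hj
      · exact ⟨j, if_pos hj⟩
      · exact ⟨j + 1, by simp [insertAt, show ¬ j + 1 < k by omega, show j + 1 ≠ k by omega]⟩

lemma strictAnti_insertAt {α : Type*} [Preorder α] {a : ℕ → α} (ha : StrictAnti a) {k : ℕ}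
    {x : α} (hlo : a k < x) (hhi : x < a (k - 1)) : StrictAnti (insertAt a k x) := by
  refine strictAnti_nat_of_succ_lt fun i => ?_
  rcases lt_trichotomy (i + 1) k with h | h | h
  · simpa [insertAt, h, show i < k by omega] using ha (Nat.lt_add_one i)
  · simpa [insertAt, ← h] using hhi
  · rcases (Nat.lt_succ_iff.mp h).eq_or_lt with rfl | h'
    · simpa [insertAt] using hlo
    · obtain ⟨j, rfl⟩ : ∃ j, i = j + 1 := ⟨i - 1, by omega⟩
      simpa [insertAt, show ¬ j + 1 < k by omega, show j + 1 ≠ k by omega,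
        show ¬ j + 1 + 1 < k by omega, show j + 1 + 1 ≠ k by omega] using ha (Nat.lt_add_one j)

lemma StrictAnti.eq_of_range_eq {β γ : Type*} [LinearOrder β] [WellFoundedLT β] [Preorder γ]
    {f g : β → γ} (hf : StrictAnti f) (hg : StrictAnti g) (h : Set.range f = Set.range g) :
    f = g :=
  (StrictMono.range_inj (γ := γᵒᵈ) hf.dual_right hg.dual_right).1 h

namespace PartitionSeq

lemma maxNeg_eq {S : Set ℤ} {m : ℤ} (hm : m ∉ S) (hneg : m < 0)
    (hgap : ∀ t, m < t → t < 0 → t ∈ S) : maxNeg S = m :=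
  IsGreatest.csSup_eq ⟨⟨hm, hneg⟩, fun t ⟨htS, ht⟩ => not_lt.1 fun hmt => htS (hgap t hmt ht)⟩

variable (η : PartitionSeq)

def mayaSeq (i : ℕ) : ℤ := η.part (i + 1) - (i + 1)

lemma strictAnti_mayaSeq : StrictAnti η.mayaSeq :=
  strictAnti_nat_of_succ_lt fun i => by
    have := η.antitone (show i + 1 ≤ i + 1 + 1 by omega)
    simp only [mayaSeq]
    push_cast
    omega

lemma range_mayaSeq : Set.range η.mayaSeq = η.mayaZ := by
  ext t
  constructor
  · rintro ⟨i, rfl⟩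
    exact ⟨i + 1, by omega, by simp [mayaSeq]⟩
  · rintro ⟨i, hi, rfl⟩
    exact ⟨i - 1, by simp only [mayaSeq, Nat.sub_add_cancel hi]; omega⟩

lemma bddAbove_setOf_le_part {c : ℕ} (hc : 0 < c) : BddAbove {i | c ≤ η.part i} := by
  obtain ⟨N, hN⟩ := η.exists_zero
  refine ⟨N, fun i hi => not_lt.1 fun hNi => ?_⟩
  have := η.antitone hNi.le
  simp only [Set.mem_ofPred_eq] at hi
  omega

lemma bddAbove_setOf_le_part_self : BddAbove {i | i ≤ η.part i} :=
  ⟨η.part 0, fun i (hi : i ≤ η.part i) => hi.trans (η.antitone (Nat.zero_le i))⟩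

lemma durfee_le_part_durfee : η.durfee ≤ η.part η.durfee :=
  Nat.sSup_mem (s := {i | i ≤ η.part i}) ⟨0, Nat.zero_le _⟩ η.bddAbove_setOf_le_part_self

lemma part_durfee_succ_le_durfee : η.part (η.durfee + 1) ≤ η.durfee :=
  Nat.lt_succ_iff.mp <| not_le.1 fun h =>
    (le_csSup η.bddAbove_setOf_le_part_self h).not_gt (Nat.lt_add_one _)

lemma one_le_durfee (hne : η.part 1 ≠ 0) : 1 ≤ η.durfee :=
  le_csSup η.bddAbove_setOf_le_part_self (Nat.one_le_iff_ne_zero.mpr hne)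

variable {η}

lemma durfee_le_dtil (hne : η.part 1 ≠ 0) : η.durfee ≤ η.dtil :=
  le_csSup (η.bddAbove_setOf_le_part (η.one_le_durfee hne)) η.durfee_le_part_durfee

lemma durfee_le_part_dtil (hne : η.part 1 ≠ 0) : η.durfee ≤ η.part η.dtil :=
  Nat.sSup_mem (s := {i | η.durfee ≤ η.part i}) ⟨_, η.durfee_le_part_durfee⟩
    (η.bddAbove_setOf_le_part (η.one_le_durfee hne))

lemma durfee_le_part_of_le_dtil (hne : η.part 1 ≠ 0) {i : ℕ} (hi : i ≤ η.dtil) :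
    η.durfee ≤ η.part i :=
  (durfee_le_part_dtil hne).trans (η.antitone hi)

lemma part_lt_durfee_of_dtil_lt (hne : η.part 1 ≠ 0) {i : ℕ} (hi : η.dtil < i) :
    η.part i < η.durfee :=
  not_le.1 fun h => (le_csSup (η.bddAbove_setOf_le_part (η.one_le_durfee hne)) h).not_gt hi

lemma maxNeg_mayaZ (hne : η.part 1 ≠ 0) :
    maxNeg η.mayaZ = (η.durfee : ℤ) - η.dtil - 1 := by
  refine maxNeg_eq ?_ ?_ fun t hlo hhi => ?_
  · rintro ⟨i, -, hi⟩
    rcases le_or_gt i η.dtil with h | h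
    · have := durfee_le_part_of_le_dtil hne h
      omega
    · have := part_lt_durfee_of_dtil_lt hne h
      omega
  · have := durfee_le_dtil hne
    omega
  · obtain ⟨n, hn⟩ : ∃ n : ℕ, (n : ℤ) = -t := ⟨(-t).toNat, by omega⟩
    have hupper := (η.antitone (show η.durfee + 1 ≤ η.durfee + n by omega)).trans
      η.part_durfee_succ_le_durfee
    have hlower := durfee_le_part_of_le_dtil hne (show η.durfee + n ≤ η.dtil by omega)
    exact ⟨η.durfee + n, by omega, by push_cast; omega⟩

lemma IsC.mayaSeq_eq {ηc : PartitionSeq} (hne : η.part 1 ≠ 0) (hc : η.IsC ηc) :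
    ηc.mayaSeq = insertAt (fun i => η.mayaSeq i - 1) η.dtil ((η.durfee : ℤ) - η.dtil - 2) := by
  have hd := durfee_le_dtil hne
  have hd1 := η.one_le_durfee hne
  refine ηc.strictAnti_mayaSeq.eq_of_range_eq
    (strictAnti_insertAt (fun i j hij => by simpa using η.strictAnti_mayaSeq hij) ?_ ?_) ?_
  · have := part_lt_durfee_of_dtil_lt hne (Nat.lt_add_one η.dtil)
    simp only [mayaSeq]
    omega
  · have := durfee_le_part_dtil hne
    simp only [mayaSeq, Nat.sub_add_cancel (hd1.trans hd)]
    omega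
  · rw [range_insertAt, ηc.range_mayaSeq, hc, maxNeg_mayaZ hne, Set.image_union,
      Set.image_singleton, Set.union_comm, Set.insert_eq, ← η.range_mayaSeq, ← Set.range_comp]
    congr 2
    ring

end PartitionSeq

/-- Parts of `η^c`: `η^c_i = η_i − 1` for `i ≤ d̃(η)`, `η^c_{d̃(η)+1} = d(η) − 1`,
and `η^c_i = η_{i−1}` for `i > d̃(η) + 1`. -/
theorem parts_of_c (η ηc : PartitionSeq) (hne : η.part 1 ≠ 0) (hc : η.IsC ηc) :
    (∀ i : ℕ, 1 ≤ i → i ≤ η.dtil → ηc.part i = η.part i - 1) ∧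
    ηc.part (η.dtil + 1) = η.durfee - 1 ∧
    (∀ i : ℕ, η.dtil + 1 < i → ηc.part i = η.part (i - 1)) := by
  have hseq := hc.mayaSeq_eq hne
  have hd := η.one_le_durfee hne
  refine ⟨fun i hi1 hi2 => ?_, ?_, fun i hi => ?_⟩
  · have h := congrFun hseq (i - 1)
    have := PartitionSeq.durfee_le_part_of_le_dtil hne hi2
    simp only [PartitionSeq.mayaSeq, insertAt, show i - 1 < η.dtil by omega, if_true,
      Nat.sub_add_cancel hi1] at h
    omega
  · have h := congrFun hseq η.dtil
    simp only [PartitionSeq.mayaSeq, insertAt, lt_self_iff_false, ↓reduceIte] at h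
    omega
  · have h := congrFun hseq (i - 1)
    simp only [PartitionSeq.mayaSeq, insertAt, show ¬ i - 1 < η.dtil by omega,
      show i - 1 ≠ η.dtil by omega, if_false, Nat.sub_add_cancel (show 1 ≤ i by omega),
      Nat.sub_add_cancel (show 1 ≤ i - 1 by omega)] at h
    omega
end

section
/- Let η be a nonempty partition. Then the parts of η^{rc} are given by: η^{rc}_i = η_i if i < d(η), η^{rc}_i = d(η) − 1 if d(η) ≤ i ≤ d̃(η), and η^{rc}_i = η_i if i > d̃(η). -/
/-- A partition `η`, given by its parts `η.part i` for `i ≥ 1` (indexed from 1;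
by convention `part 0 = part 1`), weakly decreasing and eventually zero. -/
structure MayaPartition where
  part : ℕ → ℕ
  antitone : ∀ ⦃i j : ℕ⦄, i ≤ j → part j ≤ part i
  exists_zero : ∃ N, part N = 0
  head : part 0 = part 1

namespace MayaPartition

/-- The Maya diagram of `η` in the ℤ-model: an integer `t` represents the
half-integer `t + 1/2`, so `mayaZ η` encodes `S(η) = {η_i − i + 1/2 | i ≥ 1}`. -/
def mayaZ (η : MayaPartition) : Set ℤ := {t | ∃ i : ℕ, 1 ≤ i ∧ t = (η.part i : ℤ) - (i : ℤ)}

/-- `ℓ(η)`: the number of nonzero parts. -/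
noncomputable def len (η : MayaPartition) : ℕ := sSup {i | η.part i ≠ 0}

/-- `d(η) = max {i : η_i ≥ i}` (Durfee square size), `0` for the empty partition. -/
noncomputable def durfee (η : MayaPartition) : ℕ := sSup {i | i ≤ η.part i}

/-- `d̃(η) = max {i : η_i ≥ d(η)}`. -/
noncomputable def dtil (η : MayaPartition) : ℕ := sSup {i | η.durfee ≤ η.part i}

/-- `min S⁺`: the least element of `S` representing a positive half-integer. -/
noncomputable def minPos (S : Set ℤ) : ℤ := sInf {t | t ∈ S ∧ 0 ≤ t}

/-- `max S⁻`: the greatest element not in `S` representing a negative half-integer. -/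
noncomputable def maxNeg (S : Set ℤ) : ℤ := sSup {t | t ∉ S ∧ t < 0}

/-- `ηr = η^r`: defined by `S(η^r) = {t+1 | t ∈ S(η) \ {min S(η)⁺}}`. -/
def IsR (η ηr : MayaPartition) : Prop :=
  mayaZ ηr = (fun t => t + 1) '' (mayaZ η \ {minPos (mayaZ η)})

/-- `ηc = η^c`: defined by `S(η^c) = {t−1 | t ∈ S(η) ∪ {max S(η)⁻}}`. -/
def IsC (η ηc : MayaPartition) : Prop :=
  mayaZ ηc = (fun t => t - 1) '' (mayaZ η ∪ {maxNeg (mayaZ η)})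

/-- `ηrc = η^{rc}`: defined by `S(η^{rc}) = (S(η) \ {min S(η)⁺}) ∪ {max S(η)⁻}`. -/
def IsRC (η ηrc : MayaPartition) : Prop :=
  mayaZ ηrc = (mayaZ η \ {minPos (mayaZ η)}) ∪ {maxNeg (mayaZ η)}

/-- `ηc = η′` is the conjugate partition: `η′_j = |{i ≥ 1 : η_i ≥ j}|`. -/
def IsConj (η ηc : MayaPartition) : Prop :=
  ∀ j : ℕ, 1 ≤ j → ηc.part j = Set.ncard {i : ℕ | 1 ≤ i ∧ j ≤ η.part i}

/-- `|η|`: the sum of the parts. -/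
noncomputable def size (η : MayaPartition) : ℕ := ∑ i ∈ Finset.Icc 1 η.len, η.part i

end MayaPartition

/-!
A partition is determined by its Maya diagram, because `i ↦ η_i - i` (`i ≥ 1`) enumerates
the diagram in strictly decreasing order. It therefore suffices to check that the claimed parts
have Maya diagram `(S \ {min S⁺}) ∪ {max S⁻}`. With `d = d(η)` and `d̃ = d̃(η)`, in the ℤ-model
`min S⁺ = η_d - d` and `max S⁻ = d - 1 - d̃`. Since `η_i = d` for `d < i ≤ d̃`, these rows
contribute `d - i = (d - 1) - (i - 1)`: replacing rows `d, …, d̃` by `d - 1` moves them up by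
one, drops `η_d - d` and adds `d - 1 - d̃` in row `d̃`.
-/

namespace MayaPartition

theorem strictAnti_sub_self {f : ℕ → ℕ} (hf : Antitone f) :
    StrictAnti fun i => (f i : ℤ) - i := by
  intro a b hab
  have := hf hab.le
  simp only
  omega

/-- The Maya diagram of an arbitrary part function; `η.mayaZ` is `mayaSet η.part`. -/
def mayaSet (f : ℕ → ℕ) : Set ℤ := {t | ∃ i : ℕ, 1 ≤ i ∧ t = (f i : ℤ) - i}

theorem mayaSet_eq_range (f : ℕ → ℕ) :
    mayaSet f = Set.range fun n : ℕ => (f (n + 1) : ℤ) - (n + 1 : ℕ) := by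
  ext t
  constructor
  · rintro ⟨i, hi, rfl⟩
    obtain ⟨n, rfl⟩ := Nat.exists_eq_add_of_le' hi
    exact ⟨n, rfl⟩
  · rintro ⟨n, rfl⟩
    exact ⟨n + 1, n.succ_pos, rfl⟩

theorem eq_of_mayaSet_eq {f g : ℕ → ℕ} (hf : Antitone f) (hg : Antitone g)
    (h : mayaSet f = mayaSet g) {i : ℕ} (hi : 1 ≤ i) : f i = g i := by
  have hseq {k : ℕ → ℕ} (hk : Antitone k) :
      StrictMono (OrderDual.toDual ∘ fun n : ℕ => (k (n + 1) : ℤ) - (n + 1 : ℕ)) :=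
    ((strictAnti_sub_self hk).comp_strictMono (strictMono_id.add_const 1)).dual_right
  have hrange := (hseq hf).range_inj (hseq hg) |>.1 <| by
    rw [Set.range_comp, Set.range_comp, ← mayaSet_eq_range, ← mayaSet_eq_range, h]
  obtain ⟨n, rfl⟩ := Nat.exists_eq_add_of_le' hi
  have := congrFun hrange n
  simp only [Function.comp_apply, OrderDual.toDual_inj] at this
  omega

theorem antitone_part (η : MayaPartition) : Antitone η.part :=
  fun _ _ h => η.antitone h

variable {η : MayaPartition}

theorem isGreatest_durfee : IsGreatest {i | i ≤ η.part i} η.durfee := by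
  have hbdd : BddAbove {i | i ≤ η.part i} :=
    ⟨η.part 0, fun i (hi : i ≤ η.part i) => hi.trans (η.antitone i.zero_le)⟩
  exact ⟨Nat.sSup_mem ⟨0, Nat.zero_le _⟩ hbdd, fun _ hi => le_csSup hbdd hi⟩

theorem one_le_durfee (hne : η.part 1 ≠ 0) : 1 ≤ η.durfee :=
  isGreatest_durfee.2 (Nat.one_le_iff_ne_zero.2 hne)

theorem durfee_le_part_durfee : η.durfee ≤ η.part η.durfee :=
  isGreatest_durfee.1

theorem part_lt_self_of_durfee_lt {i : ℕ} (hi : η.durfee < i) : η.part i < i :=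
  lt_of_not_ge fun h => hi.not_ge (isGreatest_durfee.2 h)

theorem isGreatest_dtil (hne : η.part 1 ≠ 0) :
    IsGreatest {i | η.durfee ≤ η.part i} η.dtil := by
  obtain ⟨N, hN⟩ := η.exists_zero
  have hbdd : BddAbove {i | η.durfee ≤ η.part i} := by
    refine ⟨N, fun i (hi : η.durfee ≤ η.part i) => le_of_not_gt fun hNi => ?_⟩
    have := η.antitone hNi.le
    have := one_le_durfee hne
    omega
  exact ⟨Nat.sSup_mem ⟨_, durfee_le_part_durfee⟩ hbdd, fun _ hi => le_csSup hbdd hi⟩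

theorem durfee_le_dtil (hne : η.part 1 ≠ 0) : η.durfee ≤ η.dtil :=
  (isGreatest_dtil hne).2 durfee_le_part_durfee

theorem durfee_le_part_dtil (hne : η.part 1 ≠ 0) : η.durfee ≤ η.part η.dtil :=
  (isGreatest_dtil hne).1

theorem part_lt_durfee_of_dtil_lt (hne : η.part 1 ≠ 0) {i : ℕ} (hi : η.dtil < i) :
    η.part i < η.durfee :=
  lt_of_not_ge fun h => hi.not_ge ((isGreatest_dtil hne).2 h)

theorem part_eq_durfee (hne : η.part 1 ≠ 0) {i : ℕ} (h₁ : η.durfee < i) (h₂ : i ≤ η.dtil) :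
    η.part i = η.durfee := by
  have := part_lt_self_of_durfee_lt (Nat.lt_succ_self η.durfee)
  have := η.antitone (Nat.succ_le_of_lt h₁)
  have := η.antitone h₂
  have := durfee_le_part_dtil hne
  omega

theorem minPos_mayaZ (hne : η.part 1 ≠ 0) :
    minPos η.mayaZ = (η.part η.durfee : ℤ) - η.durfee := by
  refine IsLeast.csInf_eq ⟨⟨⟨η.durfee, one_le_durfee hne, rfl⟩, ?_⟩, ?_⟩
  · have := durfee_le_part_durfee (η := η)
    omega
  · rintro _ ⟨⟨i, -, rfl⟩, hi⟩
    have hid : i ≤ η.durfee := le_of_not_gt fun h => by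
      have := part_lt_self_of_durfee_lt h
      omega
    exact (strictAnti_sub_self η.antitone_part).antitone hid

theorem maxNeg_mayaZ (hne : η.part 1 ≠ 0) :
    maxNeg η.mayaZ = (η.durfee : ℤ) - 1 - η.dtil := by
  have := durfee_le_dtil hne
  have := durfee_le_part_dtil hne
  refine IsGreatest.csSup_eq ⟨⟨?_, by omega⟩, ?_⟩
  · rintro ⟨i, -, heq⟩
    rcases le_or_gt i η.dtil with h | h
    · have := η.antitone h
      omega
    · have := part_lt_durfee_of_dtil_lt hne h
      omega
  · rintro t ⟨htS, ht⟩
    by_contra! h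
    refine htS ⟨(η.durfee - t).toNat, by omega, ?_⟩
    rw [part_eq_durfee hne (by omega) (by omega)]
    omega

noncomputable def rcPart (η : MayaPartition) (i : ℕ) : ℕ :=
  if η.durfee ≤ i ∧ i ≤ η.dtil then η.durfee - 1 else η.part i

theorem antitone_rcPart (hne : η.part 1 ≠ 0) : Antitone η.rcPart := by
  intro a b hab
  have hd := durfee_le_part_durfee (η := η)
  unfold rcPart
  split_ifs with hb ha ha
  · exact le_rfl
  · have := η.antitone (show a ≤ η.durfee by omega)
    omega
  · have := part_lt_durfee_of_dtil_lt hne (show η.dtil < b by omega)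
    omega
  · exact η.antitone hab

theorem mayaSet_rcPart (hne : η.part 1 ≠ 0) :
    mayaSet η.rcPart = (η.mayaZ \ {minPos η.mayaZ}) ∪ {maxNeg η.mayaZ} := by
  rw [minPos_mayaZ hne, maxNeg_mayaZ hne]
  have hinj := (strictAnti_sub_self η.antitone_part).injective
  have := one_le_durfee hne
  have := durfee_le_dtil hne
  have := durfee_le_part_durfee (η := η)
  ext t
  simp only [mayaSet, mayaZ, rcPart, Set.mem_union, Set.mem_sdiff, Set.mem_singleton_iff,
    Set.mem_ofPred_eq]
  constructor
  · rintro ⟨i, hi, rfl⟩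
    split_ifs with hwin
    · rcases hwin.2.eq_or_lt with rfl | hlt
      · right
        omega
      · have := part_eq_durfee hne (i := i + 1) (by omega) (by omega)
        exact Or.inl ⟨⟨i + 1, by omega, by push_cast; omega⟩, by omega⟩
    · refine Or.inl ⟨⟨i, hi, rfl⟩, fun h => hwin ?_⟩
      rw [hinj h]
      exact ⟨le_rfl, durfee_le_dtil hne⟩
  · rintro (⟨⟨j, hj, rfl⟩, hjd⟩ | rfl)
    · by_cases hwin : η.durfee ≤ j ∧ j ≤ η.dtil
      · have hdj : η.durfee < j := hwin.1.lt_of_ne fun h => hjd (by rw [h])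
        refine ⟨j - 1, by omega, ?_⟩
        rw [if_pos (by omega), part_eq_durfee hne hdj hwin.2]
        omega
      · exact ⟨j, hj, by rw [if_neg hwin]⟩
    · refine ⟨η.dtil, by omega, ?_⟩
      rw [if_pos ⟨durfee_le_dtil hne, le_rfl⟩]
      omega

end MayaPartition

/-- Parts of `η^{rc}`: `η^{rc}_i = η_i` for `i < d(η)`, `η^{rc}_i = d(η) − 1` for
`d(η) ≤ i ≤ d̃(η)`, and `η^{rc}_i = η_i` for `i > d̃(η)`. -/
theorem parts_of_rc (η ηrc : MayaPartition) (hne : η.part 1 ≠ 0) (hrc : η.IsRC ηrc)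
    (i : ℕ) (hi : 1 ≤ i) :
    (i < η.durfee → ηrc.part i = η.part i) ∧
    (η.durfee ≤ i → i ≤ η.dtil → ηrc.part i = η.durfee - 1) ∧
    (η.dtil < i → ηrc.part i = η.part i) := by
  have hpart : ηrc.part i = η.rcPart i :=
    MayaPartition.eq_of_mayaSet_eq ηrc.antitone_part
      (MayaPartition.antitone_rcPart hne) (hrc.trans (MayaPartition.mayaSet_rcPart hne).symm) hi
  simp only [hpart, MayaPartition.rcPart]
  refine ⟨fun h => if_neg fun h' => h'.1.not_gt h, fun h₁ h₂ => if_pos ⟨h₁, h₂⟩,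
    fun h => if_neg fun h' => h'.2.not_gt h⟩
end

section
/- Let η be a nonempty partition. If d(η) > 1 and d(η^r) = d(η) − 1, then d̃(η) = d(η); if d(η) > 1 and d(η^r) = d(η), then d̃(η) ≥ d(η) + 1 and η_i = d(η) for all d(η)+1 ≤ i ≤ d̃(η). -/
/-- A partition `η`, given by its parts `η.part i` for `i ≥ 1` (indexed from 1;
by convention `part 0 = part 1`), weakly decreasing and eventually zero. -/
structure PartitionN where
  part : ℕ → ℕ
  antitone : ∀ ⦃i j : ℕ⦄, i ≤ j → part j ≤ part i
  exists_zero : ∃ N, part N = 0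
  head : part 0 = part 1

namespace PartitionN

/-- The Maya diagram of `η` in the ℤ-model: an integer `t` represents the
half-integer `t + 1/2`, so `mayaZ η` encodes `S(η) = {η_i − i + 1/2 | i ≥ 1}`. -/
def mayaZ (η : PartitionN) : Set ℤ := {t | ∃ i : ℕ, 1 ≤ i ∧ t = (η.part i : ℤ) - (i : ℤ)}

/-- `ℓ(η)`: the number of nonzero parts. -/
noncomputable def len (η : PartitionN) : ℕ := sSup {i | η.part i ≠ 0}

/-- `d(η) = max {i : η_i ≥ i}` (Durfee square size), `0` for the empty partition. -/
noncomputable def durfee (η : PartitionN) : ℕ := sSup {i | i ≤ η.part i}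

/-- `d̃(η) = max {i : η_i ≥ d(η)}`. -/
noncomputable def dtil (η : PartitionN) : ℕ := sSup {i | η.durfee ≤ η.part i}

/-- `min S⁺`: the least element of `S` representing a positive half-integer. -/
noncomputable def minPos (S : Set ℤ) : ℤ := sInf {t | t ∈ S ∧ 0 ≤ t}

/-- `max S⁻`: the greatest element not in `S` representing a negative half-integer. -/
noncomputable def maxNeg (S : Set ℤ) : ℤ := sSup {t | t ∉ S ∧ t < 0}

/-- `ηr = η^r`: defined by `S(η^r) = {t+1 | t ∈ S(η) \ {min S(η)⁺}}`. -/
def IsR (η ηr : PartitionN) : Prop :=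
  mayaZ ηr = (fun t => t + 1) '' (mayaZ η \ {minPos (mayaZ η)})

/-- `ηc = η^c`: defined by `S(η^c) = {t−1 | t ∈ S(η) ∪ {max S(η)⁻}}`. -/
def IsC (η ηc : PartitionN) : Prop :=
  mayaZ ηc = (fun t => t - 1) '' (mayaZ η ∪ {maxNeg (mayaZ η)})

/-- `ηrc = η^{rc}`: defined by `S(η^{rc}) = (S(η) \ {min S(η)⁺}) ∪ {max S(η)⁻}`. -/
def IsRC (η ηrc : PartitionN) : Prop :=
  mayaZ ηrc = (mayaZ η \ {minPos (mayaZ η)}) ∪ {maxNeg (mayaZ η)}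

/-- `ηc = η′` is the conjugate partition: `η′_j = |{i ≥ 1 : η_i ≥ j}|`. -/
def IsConj (η ηc : PartitionN) : Prop :=
  ∀ j : ℕ, 1 ≤ j → ηc.part j = Set.ncard {i : ℕ | 1 ≤ i ∧ j ≤ η.part i}

/-- `|η|`: the sum of the parts. -/
noncomputable def size (η : PartitionN) : ℕ := ∑ i ∈ Finset.Icc 1 η.len, η.part i

end PartitionN


/-!
Since `i ↦ η_i − i` is strictly decreasing, `d(ξ)` is the number of nonnegative elements of the
Maya diagram `S(ξ)`, and `min S(η)⁺ = η_d − d` with `d = d(η)`. Removing it and shifting by one,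
the nonnegative elements of `S(η^r)` are the images of the other `d − 1` nonnegative elements of
`S(η)`, together with that of `−1 = η_{d+1} − (d + 1)` when `η_{d+1} = d`. Hence `d(η^r) = d` if
`η_{d+1} = d` and `d(η^r) = d − 1` if `η_{d+1} < d`; these are exactly the cases `d̃(η) > d` and
`d̃(η) = d`.
-/

namespace PartitionN

variable {ξ η ηr : PartitionN}

lemma strictAnti_part_sub (ξ : PartitionN) : StrictAnti fun i : ℕ => (ξ.part i : ℤ) - i := by
  intro i j hij
  have := ξ.antitone hij.le
  simp only
  omega

lemma bddAbove_le_part (ξ : PartitionN) : BddAbove {i : ℕ | i ≤ ξ.part i} :=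
  ⟨ξ.part 0, fun i hi => hi.trans (ξ.antitone (Nat.zero_le i))⟩

lemma durfee_le_part_durfee (ξ : PartitionN) : ξ.durfee ≤ ξ.part ξ.durfee :=
  Nat.sSup_mem (s := {i : ℕ | i ≤ ξ.part i}) ⟨0, Nat.zero_le _⟩ ξ.bddAbove_le_part

lemma le_part_iff_le_durfee {i : ℕ} : i ≤ ξ.part i ↔ i ≤ ξ.durfee :=
  ⟨fun h => le_csSup ξ.bddAbove_le_part h,
    fun h => h.trans (ξ.durfee_le_part_durfee.trans (ξ.antitone h))⟩

lemma part_durfee_add_one_le (ξ : PartitionN) : ξ.part (ξ.durfee + 1) ≤ ξ.durfee := by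
  have := mt (le_part_iff_le_durfee (ξ := ξ) (i := ξ.durfee + 1)).mp (by omega)
  omega

lemma durfee_pos (hne : ξ.part 1 ≠ 0) : 0 < ξ.durfee :=
  le_part_iff_le_durfee.mp (Nat.one_le_iff_ne_zero.mpr hne)

lemma le_part_add_one_iff {i : ℕ} :
    i ≤ ξ.part i + 1 ↔ i ≤ ξ.durfee ∨ (i = ξ.durfee + 1 ∧ ξ.part (ξ.durfee + 1) = ξ.durfee) := by
  have hd := ξ.part_durfee_add_one_le
  constructor
  · intro h
    by_cases hi : i ≤ ξ.durfee
    · exact Or.inl hi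
    · have : ξ.part i ≤ ξ.part (ξ.durfee + 1) := ξ.antitone (by omega)
      omega
  · rintro (hi | ⟨rfl, h⟩)
    · exact (le_part_iff_le_durfee.mpr hi).trans (Nat.le_succ _)
    · omega

lemma bddAbove_durfee_le_part (hne : ξ.part 1 ≠ 0) : BddAbove {i : ℕ | ξ.durfee ≤ ξ.part i} := by
  obtain ⟨N, hN⟩ := ξ.exists_zero
  refine ⟨N, fun i (hi : ξ.durfee ≤ ξ.part i) => ?_⟩
  by_contra! hNi
  have := ξ.antitone hNi.le
  have := durfee_pos hne
  omega

lemma durfee_le_part_dtil (hne : ξ.part 1 ≠ 0) : ξ.durfee ≤ ξ.part ξ.dtil :=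
  Nat.sSup_mem (s := {i : ℕ | ξ.durfee ≤ ξ.part i}) ⟨_, ξ.durfee_le_part_durfee⟩ (bddAbove_durfee_le_part hne)

lemma le_dtil (hne : ξ.part 1 ≠ 0) {i : ℕ} (h : ξ.durfee ≤ ξ.part i) : i ≤ ξ.dtil :=
  le_csSup (bddAbove_durfee_le_part hne) h

lemma dtil_eq_durfee_of_part_lt (hne : ξ.part 1 ≠ 0)
    (h : ξ.part (ξ.durfee + 1) < ξ.durfee) : ξ.dtil = ξ.durfee := by
  refine le_antisymm ?_ (le_dtil hne ξ.durfee_le_part_durfee)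
  by_contra! hlt
  have : ξ.part ξ.dtil ≤ ξ.part (ξ.durfee + 1) := ξ.antitone hlt
  have := durfee_le_part_dtil hne
  omega

lemma part_eq_durfee_of_lt_of_le_dtil (hne : ξ.part 1 ≠ 0) {i : ℕ} (h₁ : ξ.durfee < i)
    (h₂ : i ≤ ξ.dtil) : ξ.part i = ξ.durfee :=
  le_antisymm ((ξ.antitone h₁).trans ξ.part_durfee_add_one_le)
    ((durfee_le_part_dtil hne).trans (ξ.antitone h₂))

lemma durfee_eq_ncard_mayaZ_nonneg (ξ : PartitionN) :
    ξ.durfee = {t ∈ ξ.mayaZ | 0 ≤ t}.ncard := by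
  have : {t ∈ ξ.mayaZ | 0 ≤ t} = (fun i : ℕ => (ξ.part i : ℤ) - i) '' Set.Icc 1 ξ.durfee := by
    ext t
    simp only [mayaZ, Set.mem_ofPred_eq, Set.mem_image, Set.mem_Icc, ← le_part_iff_le_durfee]
    constructor
    · rintro ⟨⟨i, hi, rfl⟩, h⟩
      exact ⟨i, ⟨hi, by omega⟩, rfl⟩
    · rintro ⟨i, ⟨hi, h⟩, rfl⟩
      exact ⟨⟨i, hi, rfl⟩, by omega⟩
  rw [this, Set.ncard_image_of_injective _ ξ.strictAnti_part_sub.injective, Set.ncard_Icc_nat]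
  omega

lemma minPos_mayaZ (hne : ξ.part 1 ≠ 0) :
    minPos ξ.mayaZ = (ξ.part ξ.durfee : ℤ) - ξ.durfee := by
  have hmem : (ξ.part ξ.durfee : ℤ) - ξ.durfee ∈ {t | t ∈ ξ.mayaZ ∧ 0 ≤ t} :=
    ⟨⟨ξ.durfee, durfee_pos hne, rfl⟩, by have := ξ.durfee_le_part_durfee; omega⟩
  have hlb : ∀ t ∈ {t | t ∈ ξ.mayaZ ∧ 0 ≤ t}, (ξ.part ξ.durfee : ℤ) - ξ.durfee ≤ t := by
    rintro t ⟨⟨i, -, rfl⟩, ht⟩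
    exact ξ.strictAnti_part_sub.antitone (le_part_iff_le_durfee.mp (by omega))
  exact le_antisymm (csInf_le ⟨_, hlb⟩ hmem) (le_csInf ⟨_, hmem⟩ hlb)

lemma mem_mayaZ_of_isR (hne : η.part 1 ≠ 0) (hr : η.IsR ηr) {t : ℤ} :
    t ∈ ηr.mayaZ ↔ ∃ i : ℕ, 1 ≤ i ∧ i ≠ η.durfee ∧ t = (η.part i : ℤ) - i + 1 := by
  rw [hr, minPos_mayaZ hne]
  constructor
  · rintro ⟨_, ⟨⟨i, hi, rfl⟩, hmin⟩, rfl⟩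
    exact ⟨i, hi, fun hid => hmin (by rw [hid]; rfl), rfl⟩
  · rintro ⟨i, hi, hid, rfl⟩
    exact ⟨_, ⟨⟨i, hi, rfl⟩, fun he => hid (η.strictAnti_part_sub.injective he)⟩, rfl⟩

lemma durfee_eq_ncard_of_isR (hne : η.part 1 ≠ 0) (hr : η.IsR ηr) :
    ηr.durfee = {i : ℕ | 1 ≤ i ∧ i ≠ η.durfee ∧ i ≤ η.part i + 1}.ncard := by
  have : {t ∈ ηr.mayaZ | 0 ≤ t} = (fun i : ℕ => (η.part i : ℤ) - i + 1) ''
      {i : ℕ | 1 ≤ i ∧ i ≠ η.durfee ∧ i ≤ η.part i + 1} := by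
    ext t
    simp only [Set.mem_ofPred_eq, mem_mayaZ_of_isR hne hr, Set.mem_image]
    constructor
    · rintro ⟨⟨i, hi, hid, rfl⟩, h⟩
      exact ⟨i, ⟨hi, hid, by omega⟩, rfl⟩
    · rintro ⟨i, ⟨hi, hid, h⟩, rfl⟩
      exact ⟨⟨i, hi, hid, rfl⟩, by omega⟩
  rw [durfee_eq_ncard_mayaZ_nonneg, this, Set.ncard_image_of_injective _
    fun a b h => η.strictAnti_part_sub.injective (add_right_cancel h)]

lemma durfee_of_isR_of_part_eq (hne : η.part 1 ≠ 0) (hr : η.IsR ηr)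
    (h : η.part (η.durfee + 1) = η.durfee) : ηr.durfee = η.durfee := by
  have hpos := durfee_pos hne
  have : {i : ℕ | 1 ≤ i ∧ i ≠ η.durfee ∧ i ≤ η.part i + 1} =
      insert (η.durfee + 1) (Set.Ico 1 η.durfee) := by
    ext i
    simp only [Set.mem_ofPred_eq, le_part_add_one_iff, Set.mem_insert_iff, Set.mem_Ico]
    omega
  rw [durfee_eq_ncard_of_isR hne hr, this, Set.ncard_insert_of_notMem (by simp),
    Set.ncard_Ico_nat]
  omega

lemma durfee_of_isR_of_part_lt (hne : η.part 1 ≠ 0) (hr : η.IsR ηr)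
    (h : η.part (η.durfee + 1) < η.durfee) : ηr.durfee = η.durfee - 1 := by
  have : {i : ℕ | 1 ≤ i ∧ i ≠ η.durfee ∧ i ≤ η.part i + 1} = Set.Ico 1 η.durfee := by
    ext i
    simp only [Set.mem_ofPred_eq, le_part_add_one_iff, Set.mem_Ico]
    omega
  rw [durfee_eq_ncard_of_isR hne hr, this, Set.ncard_Ico_nat]

end PartitionN

open PartitionN

theorem dtil_from_durfee_r_general (η ηr : PartitionN) (hne : η.part 1 ≠ 0)
    (hr : η.IsR ηr) :
    (ηr.durfee = η.durfee - 1 → η.dtil = η.durfee) ∧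
    (ηr.durfee = η.durfee →
      η.durfee + 1 ≤ η.dtil ∧
      ∀ i : ℕ, η.durfee + 1 ≤ i → i ≤ η.dtil → η.part i = η.durfee) := by
  have hpos := durfee_pos hne
  have hle := η.part_durfee_add_one_le
  refine ⟨fun h => ?_, fun h => ?_⟩
  · have hlt : η.part (η.durfee + 1) < η.durfee := by
      by_contra! hge
      have := durfee_of_isR_of_part_eq hne hr (le_antisymm hle hge)
      omega
    exact dtil_eq_durfee_of_part_lt hne hlt
  · have heq : η.part (η.durfee + 1) = η.durfee := by
      by_contra hneq
      have := durfee_of_isR_of_part_lt hne hr (lt_of_le_of_ne hle hneq)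
      omega
    exact ⟨le_dtil hne heq.ge, fun i h₁ h₂ => part_eq_durfee_of_lt_of_le_dtil hne h₁ h₂⟩

/-- If `d(η) > 1` and `d(η^r) = d(η) − 1` then `d̃(η) = d(η)`; if `d(η) > 1` and
`d(η^r) = d(η)` then `d̃(η) ≥ d(η) + 1` and `η_i = d(η)` for `d(η)+1 ≤ i ≤ d̃(η)`. -/
theorem dtil_from_durfee_r (η ηr : PartitionN) (hne : η.part 1 ≠ 0)
    (hr : η.IsR ηr) (hd : 1 < η.durfee) :
    (ηr.durfee = η.durfee - 1 → η.dtil = η.durfee) ∧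
    (ηr.durfee = η.durfee →
      η.durfee + 1 ≤ η.dtil ∧
      ∀ i : ℕ, η.durfee + 1 ≤ i → i ≤ η.dtil → η.part i = η.durfee) :=
  dtil_from_durfee_r_general η ηr hne hr
end

section
/- For any nonempty partition η, conjugation intertwines the Maya-diagram operations: (η^c)′ = (η′)^r, (η^r)′ = (η′)^c, and (η^{rc})′ = (η′)^{rc}. -/
/-!
In the integer model `t ↦ t + 1/2`, the Maya diagram of `η′` is the complement of `S(η)`
reflected by `t ↦ -t - 1`; this follows from the Galois connection `i ≤ η′_j ↔ j ≤ η_i`.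
The reflection exchanges `min S⁺` and `max S⁻`, turns shifts by `+1` into shifts by `-1`, and
deletions into insertions. Since a partition is determined by its Maya diagram (the sequence
`η_i - i` is strictly decreasing), each identity reduces to an identity of subsets of `ℤ`.
-/

open Set

theorem Nat.exists_forall_iff_le_of_antitone {p : ℕ → Prop} (hp : Antitone p)
    (hfalse : ∃ n, ¬ p n) : ∃ k, ∀ i, 1 ≤ i → (p i ↔ i ≤ k) := by
  classical
  refine ⟨Nat.find hfalse - 1, fun i hi => ⟨fun h => ?_, fun h => ?_⟩⟩
  · by_contra hlt
    exact Nat.find_spec hfalse (hp (by omega) h)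
  · exact not_not.1 (Nat.find_min hfalse (by omega))

namespace MayaPartition

def conjDiagram (S : Set ℤ) : Set ℤ := {t | -t - 1 ∉ S}

theorem conjDiagram_image_sub_one_union (S : Set ℤ) (m : ℤ) :
    conjDiagram ((fun t => t - 1) '' (S ∪ {m})) =
      (fun t => t + 1) '' (conjDiagram S \ {-m - 1}) := by
  ext t
  simp only [conjDiagram, sub_eq_add_neg, image_add_right, mem_preimage, mem_union, mem_sdiff,
    mem_singleton_iff, mem_ofPred_eq]
  grind

theorem conjDiagram_image_add_one_diff (S : Set ℤ) (p : ℤ) :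
    conjDiagram ((fun t => t + 1) '' (S \ {p})) =
      (fun t => t - 1) '' (conjDiagram S ∪ {-p - 1}) := by
  ext t
  simp only [conjDiagram, sub_eq_add_neg, image_add_right, mem_preimage, mem_union, mem_sdiff,
    mem_singleton_iff, mem_ofPred_eq]
  grind

theorem conjDiagram_diff_union (S : Set ℤ) {p m : ℤ} (hpm : p ≠ m) :
    conjDiagram ((S \ {p}) ∪ {m}) = (conjDiagram S \ {-m - 1}) ∪ {-p - 1} := by
  ext t
  simp only [conjDiagram, mem_union, mem_sdiff, mem_singleton_iff, mem_ofPred_eq]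
  grind

section Extrema

variable {S : Set ℤ}

theorem isLeast_minPos (h : ∃ t ∈ S, 0 ≤ t) : IsLeast {t | t ∈ S ∧ 0 ≤ t} (minPos S) :=
  have hbdd : BddBelow {t | t ∈ S ∧ 0 ≤ t} := ⟨0, fun _ ht => ht.2⟩
  ⟨Int.csInf_mem h hbdd, fun _ ht => csInf_le hbdd ht⟩

theorem isGreatest_maxNeg (h : ∃ t ∉ S, t < 0) : IsGreatest {t | t ∉ S ∧ t < 0} (maxNeg S) :=
  have hbdd : BddAbove {t | t ∉ S ∧ t < 0} := ⟨0, fun _ ht => ht.2.le⟩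
  ⟨Int.csSup_mem h hbdd, fun _ ht => le_csSup hbdd ht⟩

theorem minPos_conjDiagram (h : ∃ t ∉ S, t < 0) : minPos (conjDiagram S) = -maxNeg S - 1 := by
  obtain ⟨⟨hm, hm0⟩, hmax⟩ := isGreatest_maxNeg h
  refine IsLeast.csInf_eq ⟨⟨by simpa [conjDiagram] using hm, by omega⟩, fun t ⟨ht, ht0⟩ => ?_⟩
  have := hmax ⟨ht, by omega⟩
  omega

theorem maxNeg_conjDiagram (h : ∃ t ∈ S, 0 ≤ t) : maxNeg (conjDiagram S) = -minPos S - 1 := by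
  obtain ⟨⟨hp, hp0⟩, hmin⟩ := isLeast_minPos h
  refine IsGreatest.csSup_eq ⟨⟨by simpa [conjDiagram] using hp, by omega⟩, fun t ⟨ht, ht0⟩ => ?_⟩
  have := hmin ⟨not_not.1 ht, by omega⟩
  omega

end Extrema

variable {μ ν : MayaPartition} (η : MayaPartition)

theorem ext_of_part (h : ∀ i, 1 ≤ i → μ.part i = ν.part i) : μ = ν := by
  have hpart : μ.part = ν.part := by
    funext i
    rcases Nat.eq_zero_or_pos i with rfl | hi
    · rw [μ.head, ν.head, h 1 le_rfl]
    · exact h i hi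
  cases μ
  cases ν
  cases hpart
  rfl

theorem finite_setOf_le_part {j : ℕ} (hj : 0 < j) : {i | j ≤ η.part i}.Finite := by
  obtain ⟨N, hN⟩ := η.exists_zero
  refine (finite_Iio N).subset fun i hi => ?_
  by_contra hNi
  have := η.antitone (not_lt.1 hNi)
  have : j ≤ η.part i := hi
  omega

/- `max j 1` builds the convention `part 0 = part 1` into the count. -/
noncomputable def conj : MayaPartition where
  part j := {i | 1 ≤ i ∧ max j 1 ≤ η.part i}.ncard
  antitone i j hij := ncard_le_ncard (fun k hk => ⟨hk.1, (max_le_max_right 1 hij).trans hk.2⟩)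
    ((η.finite_setOf_le_part (lt_max_of_lt_right one_pos)).subset fun _ h => h.2)
  exists_zero := ⟨η.part 1 + 1, by
    convert ncard_empty ℕ
    refine eq_empty_of_forall_notMem fun i hi => ?_
    have := η.antitone hi.1
    have := hi.2
    omega⟩
  head := rfl

theorem conj_part {j : ℕ} (hj : 1 ≤ j) : η.conj.part j = {i | 1 ≤ i ∧ j ≤ η.part i}.ncard := by
  simp only [conj, max_eq_left hj]

theorem isConj_conj : η.IsConj η.conj := fun _ hj => η.conj_part hj

theorem isConj_iff : μ.IsConj ν ↔ ν = μ.conj :=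
  ⟨fun h => ext_of_part fun _ hj => (h _ hj).trans (μ.conj_part hj).symm,
    by rintro rfl; exact μ.isConj_conj⟩

theorem le_conj_part_iff {i j : ℕ} (hi : 1 ≤ i) (hj : 1 ≤ j) :
    i ≤ η.conj.part j ↔ j ≤ η.part i := by
  obtain ⟨k, hk⟩ := Nat.exists_forall_iff_le_of_antitone (p := fun i => j ≤ η.part i)
    (fun _ _ hab h => h.trans (η.antitone hab))
    (let ⟨N, hN⟩ := η.exists_zero; ⟨N, by omega⟩)
  have hset : {i | 1 ≤ i ∧ j ≤ η.part i} = Icc 1 k := by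
    ext i
    exact ⟨fun h => ⟨h.1, (hk i h.1).1 h.2⟩, fun h => ⟨h.1, (hk i h.1).2 h.2⟩⟩
  rw [η.conj_part hj, hset, ncard_Icc_nat, Nat.add_sub_cancel, hk i hi]

def mayaSeq (n : ℕ) : ℤ := (η.part (n + 1) : ℤ) - ((n + 1 : ℕ) : ℤ)

theorem strictAnti_mayaSeq : StrictAnti η.mayaSeq :=
  strictAnti_nat_of_succ_lt fun n => by
    have := η.antitone (show n + 1 ≤ n + 1 + 1 by omega)
    simp only [mayaSeq]
    push_cast
    omega

theorem range_mayaSeq : range η.mayaSeq = η.mayaZ := by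
  ext t
  constructor
  · rintro ⟨n, rfl⟩
    exact ⟨n + 1, by omega, rfl⟩
  · rintro ⟨i, hi, rfl⟩
    exact ⟨i - 1, by simp only [mayaSeq, Nat.sub_add_cancel hi]⟩

theorem mayaZ_injective : Function.Injective mayaZ := by
  intro μ ν h
  have hseq : μ.mayaSeq = ν.mayaSeq :=
    (StrictMono.range_inj (γ := ℤᵒᵈ) μ.strictAnti_mayaSeq ν.strictAnti_mayaSeq).1
      (by exact (range_mayaSeq μ).trans (h.trans (range_mayaSeq ν).symm))
  refine ext_of_part fun i hi => ?_
  have := congrFun hseq (i - 1)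
  simp only [mayaSeq, Nat.sub_add_cancel hi] at this
  omega

theorem mayaZ_conj : η.conj.mayaZ = conjDiagram η.mayaZ := by
  ext t
  constructor
  · rintro ⟨j, hj, rfl⟩ ⟨i, hi, hij⟩
    have hgal := η.le_conj_part_iff hi hj
    by_cases h : j ≤ η.part i
    · have := hgal.2 h
      omega
    · have := mt hgal.1 h
      omega
  · intro ht
    -- `k` counts the `i ≥ 1` with `η_i - i ≥ -t`; the witness is `η′_{k-t} = k`.
    obtain ⟨k, hk⟩ := Nat.exists_forall_iff_le_of_antitone
      (p := fun i => -t ≤ (η.part i : ℤ) - (i : ℤ))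
      (fun a b hab h => by have := η.antitone hab; simp only at h ⊢; omega)
      ⟨η.part 0 + t.toNat + 1, by have := η.antitone (Nat.zero_le (η.part 0 + t.toNat + 1)); omega⟩
    have hk1 : ¬ -t ≤ (η.part (k + 1) : ℤ) - ((k + 1 : ℕ) : ℤ) :=
      fun h => by have := (hk (k + 1) (by omega)).1 h; omega
    have hne : (η.part (k + 1) : ℤ) - ((k + 1 : ℕ) : ℤ) ≠ -t - 1 :=
      fun h => ht ⟨k + 1, by omega, h.symm⟩
    obtain ⟨j, hj⟩ : ∃ j : ℕ, (j : ℤ) = k - t := ⟨(k - t).toNat, by omega⟩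
    have hj1 : 1 ≤ j := by omega
    have hconj : η.conj.part j = k := by
      refine le_antisymm (not_lt.1 fun hlt => ?_) ?_
      · have := (η.le_conj_part_iff (i := k + 1) (by omega) hj1).1 hlt
        omega
      · rcases Nat.eq_zero_or_pos k with hk0 | hk0
        · omega
        · refine (η.le_conj_part_iff hk0 hj1).2 ?_
          have := (hk k hk0).2 le_rfl
          omega
    exact ⟨j, hj1, by omega⟩

theorem IsConj.mayaZ_eq (h : μ.IsConj ν) : ν.mayaZ = conjDiagram μ.mayaZ := by
  rw [isConj_iff.1 h, mayaZ_conj]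

theorem isConj_of_mayaZ_eq (h : ν.mayaZ = conjDiagram μ.mayaZ) : μ.IsConj ν :=
  isConj_iff.2 (mayaZ_injective (h.trans μ.mayaZ_conj.symm))

theorem exists_mem_mayaZ_nonneg (h : η.part 1 ≠ 0) : ∃ t ∈ η.mayaZ, 0 ≤ t :=
  ⟨η.part 1 - 1, ⟨1, le_rfl, by simp⟩, by omega⟩

theorem exists_notMem_mayaZ_neg (h : η.part 1 ≠ 0) : ∃ t ∉ η.mayaZ, t < 0 := by
  have h1 : 1 ≤ η.conj.part 1 := (η.le_conj_part_iff le_rfl le_rfl).2 (by omega)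
  have hmem : (η.conj.part 1 : ℤ) - 1 ∈ conjDiagram η.mayaZ :=
    η.mayaZ_conj ▸ ⟨1, le_rfl, by simp⟩
  exact ⟨-η.conj.part 1, by simpa [conjDiagram] using hmem, by omega⟩

end MayaPartition

open MayaPartition in
/-- Conjugation intertwines the Maya-diagram operations:
`(η^c)′ = (η′)^r`, `(η^r)′ = (η′)^c`, `(η^{rc})′ = (η′)^{rc}`. -/
theorem conj_intertwines (η ηconj ηr ηc ηrc ηconjr ηconjc ηconjrc : MayaPartition)
    (hne : η.part 1 ≠ 0) (hconj : η.IsConj ηconj)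
    (hr : η.IsR ηr) (hc : η.IsC ηc) (hrc : η.IsRC ηrc)
    (hr' : ηconj.IsR ηconjr) (hc' : ηconj.IsC ηconjc) (hrc' : ηconj.IsRC ηconjrc) :
    ηc.IsConj ηconjr ∧ ηr.IsConj ηconjc ∧ ηrc.IsConj ηconjrc := by
  have hS := hconj.mayaZ_eq
  have hpos := η.exists_mem_mayaZ_nonneg hne
  have hneg := η.exists_notMem_mayaZ_neg hne
  have hmin : minPos ηconj.mayaZ = -maxNeg η.mayaZ - 1 := hS ▸ minPos_conjDiagram hneg
  have hmax : maxNeg ηconj.mayaZ = -minPos η.mayaZ - 1 := hS ▸ maxNeg_conjDiagram hpos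
  have hmp : minPos η.mayaZ ≠ maxNeg η.mayaZ :=
    ((isGreatest_maxNeg hneg).1.2.trans_le (isLeast_minPos hpos).1.2).ne'
  refine ⟨isConj_of_mayaZ_eq ?_, isConj_of_mayaZ_eq ?_, isConj_of_mayaZ_eq ?_⟩
  · rw [hr', hmin, hS, hc, conjDiagram_image_sub_one_union]
  · rw [hc', hmax, hS, hr, conjDiagram_image_add_one_diff]
  · rw [hrc', hmin, hmax, hS, hrc, conjDiagram_diff_union _ hmp]
end

section
/- For any nonempty partition η: (i) {i ∈ ℤ_{>0} : η^r_i > i + 1} = {i ∈ ℤ_{>0} : i ≤ d(η) − 1}; (ii) {i ∈ ℤ_{>0} : η^c_i ≥ i − 1} = {i ∈ ℤ_{>0} : i ≤ d(η)}. -/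
/-- A partition `η`, given by its parts `η.part i` for `i ≥ 1` (indexed from 1;
by convention `part 0 = part 1`), weakly decreasing and eventually zero. -/
structure MPartition where
  part : ℕ → ℕ
  antitone : ∀ ⦃i j : ℕ⦄, i ≤ j → part j ≤ part i
  exists_zero : ∃ N, part N = 0
  head : part 0 = part 1

namespace MPartition

/-- The Maya diagram of `η` in the ℤ-model: an integer `t` represents the
half-integer `t + 1/2`, so `mayaZ η` encodes `S(η) = {η_i − i + 1/2 | i ≥ 1}`. -/
def mayaZ (η : MPartition) : Set ℤ := {t | ∃ i : ℕ, 1 ≤ i ∧ t = (η.part i : ℤ) - (i : ℤ)}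

/-- `ℓ(η)`: the number of nonzero parts. -/
noncomputable def len (η : MPartition) : ℕ := sSup {i | η.part i ≠ 0}

/-- `d(η) = max {i : η_i ≥ i}` (Durfee square size), `0` for the empty partition. -/
noncomputable def durfee (η : MPartition) : ℕ := sSup {i | i ≤ η.part i}

/-- `d̃(η) = max {i : η_i ≥ d(η)}`. -/
noncomputable def dtil (η : MPartition) : ℕ := sSup {i | η.durfee ≤ η.part i}

/-- `min S⁺`: the least element of `S` representing a positive half-integer. -/
noncomputable def minPos (S : Set ℤ) : ℤ := sInf {t | t ∈ S ∧ 0 ≤ t}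

/-- `max S⁻`: the greatest element not in `S` representing a negative half-integer. -/
noncomputable def maxNeg (S : Set ℤ) : ℤ := sSup {t | t ∉ S ∧ t < 0}

/-- `ηr = η^r`: defined by `S(η^r) = {t+1 | t ∈ S(η) \ {min S(η)⁺}}`. -/
def IsR (η ηr : MPartition) : Prop :=
  mayaZ ηr = (fun t => t + 1) '' (mayaZ η \ {minPos (mayaZ η)})

/-- `ηc = η^c`: defined by `S(η^c) = {t−1 | t ∈ S(η) ∪ {max S(η)⁻}}`. -/
def IsC (η ηc : MPartition) : Prop :=
  mayaZ ηc = (fun t => t - 1) '' (mayaZ η ∪ {maxNeg (mayaZ η)})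

/-- `ηrc = η^{rc}`: defined by `S(η^{rc}) = (S(η) \ {min S(η)⁺}) ∪ {max S(η)⁻}`. -/
def IsRC (η ηrc : MPartition) : Prop :=
  mayaZ ηrc = (mayaZ η \ {minPos (mayaZ η)}) ∪ {maxNeg (mayaZ η)}

/-- `ηc = η′` is the conjugate partition: `η′_j = |{i ≥ 1 : η_i ≥ j}|`. -/
def IsConj (η ηc : MPartition) : Prop :=
  ∀ j : ℕ, 1 ≤ j → ηc.part j = Set.ncard {i : ℕ | 1 ≤ i ∧ j ≤ η.part i}

/-- `|η|`: the sum of the parts. -/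
noncomputable def size (η : MPartition) : ℕ := ∑ i ∈ Finset.Icc 1 η.len, η.part i

end MPartition

/-!
Since `i ↦ μ_i − i` is strictly decreasing, for every integer `k` the indices `i ≥ 1` with
`μ_i − i ≥ k` form an initial segment `{1, …, m}` whose length `m` is the number of elements
of the Maya diagram `S(μ)` that are `≥ k`. Both value sets in the theorem are of this form, so
it suffices to count. For `k = 0` the count is `d(η)`. Passing to `η^r` deletes the least
nonnegative element of `S(η)` and shifts up by one, so `S(η^r)` has `d(η) − 1` elements `≥ 2`;
passing to `η^c` adds a negative element and shifts down by one, so `S(η^c)` has `d(η)`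
elements `≥ −1`.
-/

namespace MPartition

lemma strictAnti_part_sub (μ : MPartition) : StrictAnti fun j : ℕ => (μ.part j : ℤ) - j :=
  strictAnti_nat_of_succ_lt fun n => by
    have := μ.antitone (Nat.le_add_right n 1)
    push_cast
    omega

lemma part_eq_zero_of_le {μ : MPartition} {N j : ℕ} (hN : μ.part N = 0) (h : N ≤ j) :
    μ.part j = 0 :=
  Nat.eq_zero_of_le_zero (hN ▸ μ.antitone h)

lemma exists_le_part_sub_iff (μ : MPartition) (k : ℤ) :
    ∃ m : ℕ, ∀ i, 1 ≤ i → (k ≤ (μ.part i : ℤ) - i ↔ i ≤ m) := by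
  obtain ⟨N, hN⟩ := μ.exists_zero
  have hex : ∃ m : ℕ, (μ.part (m + 1) : ℤ) - (m + 1 : ℕ) < k :=
    ⟨N + k.natAbs, by rw [part_eq_zero_of_le hN (by omega)]; omega⟩
  refine ⟨Nat.find hex, fun i hi => ⟨fun hk => ?_, fun him => ?_⟩⟩
  · by_contra! h
    exact (Nat.find_spec hex).not_ge (hk.trans (μ.strictAnti_part_sub.antitone h))
  · have := Nat.find_min hex (show i - 1 < Nat.find hex by omega)
    rw [Nat.sub_add_cancel hi] at this
    exact not_lt.mp this

lemma ncard_mayaZ_ge_of_iff (μ : MPartition) {k : ℤ} {m : ℕ}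
    (h : ∀ i, 1 ≤ i → (k ≤ (μ.part i : ℤ) - i ↔ i ≤ m)) :
    {t | t ∈ μ.mayaZ ∧ k ≤ t}.ncard = m := by
  have hset : {t | t ∈ μ.mayaZ ∧ k ≤ t} =
      (fun j : ℕ => (μ.part j : ℤ) - j) '' Set.Icc 1 m := by
    ext t
    simp only [mayaZ, Set.mem_ofPred_eq, Set.mem_image, Set.mem_Icc]
    constructor
    · rintro ⟨⟨j, hj, rfl⟩, hk⟩
      exact ⟨j, ⟨hj, (h j hj).1 hk⟩, rfl⟩
    · rintro ⟨j, ⟨hj, hjm⟩, rfl⟩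
      exact ⟨⟨j, hj, rfl⟩, (h j hj).2 hjm⟩
  rw [hset, Set.ncard_image_of_injective _ μ.strictAnti_part_sub.injective, Set.ncard_Icc_nat,
    Nat.add_sub_cancel]

lemma le_part_sub_iff_le_ncard (μ : MPartition) (k : ℤ) {i : ℕ} (hi : 1 ≤ i) :
    k ≤ (μ.part i : ℤ) - i ↔ i ≤ {t | t ∈ μ.mayaZ ∧ k ≤ t}.ncard := by
  obtain ⟨m, hm⟩ := μ.exists_le_part_sub_iff k
  rw [μ.ncard_mayaZ_ge_of_iff hm]
  exact hm i hi

lemma le_durfee_iff (μ : MPartition) {i : ℕ} : i ≤ μ.durfee ↔ i ≤ μ.part i := by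
  obtain ⟨N, hN⟩ := μ.exists_zero
  have hbdd : BddAbove {j | j ≤ μ.part j} := ⟨N, fun j (hj : j ≤ μ.part j) => by
    by_contra! h
    have := part_eq_zero_of_le hN h.le
    omega⟩
  have hd : μ.durfee ≤ μ.part μ.durfee := Nat.sSup_mem ⟨0, Nat.zero_le (μ.part 0)⟩ hbdd
  exact ⟨fun h => h.trans (hd.trans (μ.antitone h)), fun h => le_csSup hbdd h⟩

lemma ncard_mayaZ_nonneg (μ : MPartition) : {t | t ∈ μ.mayaZ ∧ 0 ≤ t}.ncard = μ.durfee :=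
  μ.ncard_mayaZ_ge_of_iff fun i _ => by rw [le_durfee_iff]; omega

lemma minPos_le {S : Set ℤ} {t : ℤ} (ht : t ∈ S) (h0 : 0 ≤ t) : minPos S ≤ t :=
  csInf_le ⟨0, fun _ hs => hs.2⟩ ⟨ht, h0⟩

lemma minPos_mayaZ_mem {μ : MPartition} (hne : μ.part 1 ≠ 0) :
    minPos μ.mayaZ ∈ {t | t ∈ μ.mayaZ ∧ 0 ≤ t} :=
  Int.csInf_mem ⟨(μ.part 1 : ℤ) - 1, ⟨1, le_rfl, by norm_num⟩, by omega⟩ ⟨0, fun _ hs => hs.2⟩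

lemma maxNeg_neg {S : Set ℤ} (h : ∃ t ∉ S, t < 0) : maxNeg S < 0 :=
  (Int.csSup_mem h ⟨0, fun _ hs => hs.2.le⟩).2

/-- If `N ≥ 2` is the first index with `μ_N = 0`, then `1 − N` lies strictly between
`μ_{N-1} − (N − 1)` and `μ_N − N`. -/
lemma exists_neg_not_mem_mayaZ {μ : MPartition} (hne : μ.part 1 ≠ 0) :
    ∃ t ∉ μ.mayaZ, t < 0 := by
  have hN := Nat.find_spec μ.exists_zero
  have hN2 : 2 ≤ Nat.find μ.exists_zero :=
    (Nat.le_find_iff _ _).2 fun m hm => by interval_cases m <;> simpa [μ.head] using hne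
  have hpos := Nat.find_min μ.exists_zero (show Nat.find μ.exists_zero - 1 < _ by omega)
  refine ⟨1 - Nat.find μ.exists_zero, ?_, by omega⟩
  rintro ⟨j, hj, hjeq⟩
  rcases le_or_gt j (Nat.find μ.exists_zero - 1) with h | h
  · have := μ.antitone h
    omega
  · have := part_eq_zero_of_le hN (show Nat.find μ.exists_zero ≤ j by omega)
    omega

lemma mayaZ_ge_two_of_isR {η ηr : MPartition} (hr : η.IsR ηr) (hne : η.part 1 ≠ 0) :
    {t | t ∈ ηr.mayaZ ∧ 2 ≤ t} =
      (· + 1) '' ({t | t ∈ η.mayaZ ∧ 0 ≤ t} \ {minPos η.mayaZ}) := by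
  have hp0 := (minPos_mayaZ_mem hne).2
  rw [show ηr.mayaZ = _ from hr]
  ext t
  simp only [Set.mem_ofPred_eq, Set.mem_image, Set.mem_sdiff, Set.mem_singleton_iff]
  constructor
  · rintro ⟨⟨x, ⟨hxS, hxp⟩, rfl⟩, h2⟩
    exact ⟨x, ⟨⟨hxS, by omega⟩, hxp⟩, rfl⟩
  · rintro ⟨x, ⟨⟨hxS, hx0⟩, hxp⟩, rfl⟩
    have := minPos_le hxS hx0
    exact ⟨⟨x, ⟨hxS, hxp⟩, rfl⟩, by omega⟩

lemma ncard_mayaZ_ge_two_of_isR {η ηr : MPartition} (hr : η.IsR ηr) (hne : η.part 1 ≠ 0) :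
    {t | t ∈ ηr.mayaZ ∧ 2 ≤ t}.ncard = η.durfee - 1 := by
  rw [mayaZ_ge_two_of_isR hr hne, Set.ncard_image_of_injective _ (add_left_injective 1),
    Set.ncard_sdiff_singleton_of_mem (minPos_mayaZ_mem hne), ncard_mayaZ_nonneg]

lemma mayaZ_ge_neg_one_of_isC {η ηc : MPartition} (hc : η.IsC ηc) (hne : η.part 1 ≠ 0) :
    {t | t ∈ ηc.mayaZ ∧ -1 ≤ t} = (· - 1) '' {t | t ∈ η.mayaZ ∧ 0 ≤ t} := by
  have hq := maxNeg_neg (exists_neg_not_mem_mayaZ hne)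
  rw [show ηc.mayaZ = _ from hc]
  ext t
  simp only [Set.mem_ofPred_eq, Set.mem_image, Set.mem_union, Set.mem_singleton_iff]
  constructor
  · rintro ⟨⟨x, hxS | rfl, rfl⟩, h⟩
    · exact ⟨x, ⟨hxS, by omega⟩, rfl⟩
    · omega
  · rintro ⟨x, ⟨hxS, hx0⟩, rfl⟩
    exact ⟨⟨x, Or.inl hxS, rfl⟩, by omega⟩

lemma ncard_mayaZ_ge_neg_one_of_isC {η ηc : MPartition} (hc : η.IsC ηc) (hne : η.part 1 ≠ 0) :
    {t | t ∈ ηc.mayaZ ∧ -1 ≤ t}.ncard = η.durfee := by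
  rw [mayaZ_ge_neg_one_of_isC hc hne, Set.ncard_image_of_injective _ sub_left_injective,
    ncard_mayaZ_nonneg]

end MPartition

open MPartition

/-- `{i > 0 : η^r_i > i+1} = {i > 0 : i ≤ d(η)−1}` and
`{i > 0 : η^c_i ≥ i−1} = {i > 0 : i ≤ d(η)}`. -/
theorem value_sets_r_c (η ηr ηc : MPartition) (hne : η.part 1 ≠ 0)
    (hr : η.IsR ηr) (hc : η.IsC ηc) (i : ℕ) (hi : 1 ≤ i) :
    (i + 1 < ηr.part i ↔ i ≤ η.durfee - 1) ∧
    (i - 1 ≤ ηc.part i ↔ i ≤ η.durfee) := by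
  have hr' := ηr.le_part_sub_iff_le_ncard 2 hi
  have hc' := ηc.le_part_sub_iff_le_ncard (-1) hi
  rw [ncard_mayaZ_ge_two_of_isR hr hne] at hr'
  rw [ncard_mayaZ_ge_neg_one_of_isC hc hne] at hc'
  rw [← hr', ← hc']
  omega
end

section
/- For nonempty partitions λ and μ and any partition ν, the combined weight factor satisfies the symmetry q^{K₂(λ,μ,ν)} = conj(q^{K₃(μ′,λ′,ν′)}), where conj denotes the substitution q_k ↦ q_{−k}. -/
/-- A partition `η`, given by its parts `η.part i` for `i ≥ 1` (indexed from 1;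
by convention `part 0 = part 1`), weakly decreasing and eventually zero. -/
structure YPartition where
  part : ℕ → ℕ
  antitone : ∀ ⦃i j : ℕ⦄, i ≤ j → part j ≤ part i
  exists_zero : ∃ N, part N = 0
  head : part 0 = part 1

namespace YPartition

/-- The Maya diagram of `η` in the ℤ-model: an integer `t` represents the
half-integer `t + 1/2`, so `mayaZ η` encodes `S(η) = {η_i − i + 1/2 | i ≥ 1}`. -/
def mayaZ (η : YPartition) : Set ℤ := {t | ∃ i : ℕ, 1 ≤ i ∧ t = (η.part i : ℤ) - (i : ℤ)}

/-- `ℓ(η)`: the number of nonzero parts. -/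
noncomputable def len (η : YPartition) : ℕ := sSup {i | η.part i ≠ 0}

/-- `d(η) = max {i : η_i ≥ i}` (Durfee square size), `0` for the empty partition. -/
noncomputable def durfee (η : YPartition) : ℕ := sSup {i | i ≤ η.part i}

/-- `d̃(η) = max {i : η_i ≥ d(η)}`. -/
noncomputable def dtil (η : YPartition) : ℕ := sSup {i | η.durfee ≤ η.part i}

/-- `min S⁺`: the least element of `S` representing a positive half-integer. -/
noncomputable def minPos (S : Set ℤ) : ℤ := sInf {t | t ∈ S ∧ 0 ≤ t}

/-- `max S⁻`: the greatest element not in `S` representing a negative half-integer. -/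
noncomputable def maxNeg (S : Set ℤ) : ℤ := sSup {t | t ∉ S ∧ t < 0}

/-- `ηr = η^r`: defined by `S(η^r) = {t+1 | t ∈ S(η) \ {min S(η)⁺}}`. -/
def IsR (η ηr : YPartition) : Prop :=
  mayaZ ηr = (fun t => t + 1) '' (mayaZ η \ {minPos (mayaZ η)})

/-- `ηc = η^c`: defined by `S(η^c) = {t−1 | t ∈ S(η) ∪ {max S(η)⁻}}`. -/
def IsC (η ηc : YPartition) : Prop :=
  mayaZ ηc = (fun t => t - 1) '' (mayaZ η ∪ {maxNeg (mayaZ η)})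

/-- `ηrc = η^{rc}`: defined by `S(η^{rc}) = (S(η) \ {min S(η)⁺}) ∪ {max S(η)⁻}`. -/
def IsRC (η ηrc : YPartition) : Prop :=
  mayaZ ηrc = (mayaZ η \ {minPos (mayaZ η)}) ∪ {maxNeg (mayaZ η)}

/-- `ηc = η′` is the conjugate partition: `η′_j = |{i ≥ 1 : η_i ≥ j}|`. -/
def IsConj (η ηc : YPartition) : Prop :=
  ∀ j : ℕ, 1 ≤ j → ηc.part j = Set.ncard {i : ℕ | 1 ≤ i ∧ j ≤ η.part i}

/-- `|η|`: the sum of the parts. -/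
noncomputable def size (η : YPartition) : ℕ := ∑ i ∈ Finset.Icc 1 η.len, η.part i

end YPartition

/-- Exponent function of `q^{K₂(λ,μ,ν)}`, where `lamc` stands for `λ′`:
`q^{K₂} = q_{1−d(λ′)}^{−λ′_{d(λ′)}} · ∏_{i=1}^{d(λ′)−1} q_{−i} ·
∏_{i=1}^{d(λ′)−1} (q_{−i}/q_{−i+1})^{λ′_i} · ∏_{i=1}^{ℓ(μ)} (q_i/q_{i−1})^{μ_i} ·
∏_{i=1}^{ν_{d(ν)}−d(ν)} q_i^{−1}`. -/
noncomputable def K2 (lamc mu nu : YPartition) : ℤ → ℤ := fun k =>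
  (if k = 1 - (lamc.durfee : ℤ) then -(lamc.part lamc.durfee : ℤ) else 0)
  + (∑ i ∈ Finset.Icc 1 (lamc.durfee - 1), if k = -(i : ℤ) then 1 else 0)
  + (∑ i ∈ Finset.Icc 1 (lamc.durfee - 1), (lamc.part i : ℤ) *
      ((if k = -(i : ℤ) then 1 else 0) - (if k = -(i : ℤ) + 1 then 1 else 0)))
  + (∑ i ∈ Finset.Icc 1 mu.len, (mu.part i : ℤ) *
      ((if k = (i : ℤ) then 1 else 0) - (if k = (i : ℤ) - 1 then 1 else 0)))
  + (∑ i ∈ Finset.Icc 1 (nu.part nu.durfee - nu.durfee), if k = (i : ℤ) then -1 else 0)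

/-- Exponent function of `q^{K₃(λ,μ,ν)}`, where `lamc` stands for `λ′`:
`q^{K₃} = q_{d(μ)−1}^{−μ_{d(μ)}} · ∏_{i=1}^{d(μ)−1} q_i ·
∏_{i=1}^{d(μ)−1} (q_i/q_{i−1})^{μ_i} · ∏_{i=1}^{ℓ(λ′)} (q_{−i}/q_{−i+1})^{λ′_i} ·
∏_{i=1}^{d̃(ν)−d(ν)} q_{−i}^{−1}`. -/
noncomputable def K3 (lamc mu nu : YPartition) : ℤ → ℤ := fun k =>
  (if k = (mu.durfee : ℤ) - 1 then -(mu.part mu.durfee : ℤ) else 0)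
  + (∑ i ∈ Finset.Icc 1 (mu.durfee - 1), if k = (i : ℤ) then 1 else 0)
  + (∑ i ∈ Finset.Icc 1 (mu.durfee - 1), (mu.part i : ℤ) *
      ((if k = (i : ℤ) then 1 else 0) - (if k = (i : ℤ) - 1 then 1 else 0)))
  + (∑ i ∈ Finset.Icc 1 lamc.len, (lamc.part i : ℤ) *
      ((if k = -(i : ℤ) then 1 else 0) - (if k = -(i : ℤ) + 1 then 1 else 0)))
  + (∑ i ∈ Finset.Icc 1 (nu.dtil - nu.durfee), if k = -(i : ℤ) then -1 else 0)

/-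
Both sides are sums of the same five kinds of monomials once the three conjugation facts are in
place: `(μ′)′ = μ`, `d(ν′) = d(ν)` and `d̃(ν′) = ν_{d(ν)}`. Each follows from the duality
`j ≤ η′_i ↔ i ≤ η_j` (for `i, j ≥ 1`), which in turn holds because the rows of length at least `i`
form an initial segment `{1, …, η′_i}`. After rewriting, `k ↦ -k` matches the summands termwise.
-/

theorem le_ncard_setOf_iff_of_antitone {p : ℕ → Prop} (hp : Antitone p) {N : ℕ} (hN : ¬ p N)
    {j : ℕ} (hj : 1 ≤ j) : j ≤ {m | 1 ≤ m ∧ p m}.ncard ↔ p j := by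
  constructor
  · intro hle
    by_contra hpj
    have hsub : {m | 1 ≤ m ∧ p m} ⊆ Set.Icc 1 (j - 1) := fun m ⟨h1, hm⟩ =>
      ⟨h1, Nat.le_sub_one_of_lt (lt_of_not_ge fun hjm => hpj (hp hjm hm))⟩
    have := Set.ncard_le_ncard hsub (Set.finite_Icc 1 (j - 1))
    rw [Set.ncard_Icc_nat] at this
    omega
  · intro hpj
    have hfin : {m | 1 ≤ m ∧ p m}.Finite :=
      (Set.finite_Icc 1 N).subset fun m ⟨h1, hm⟩ => ⟨h1, le_of_not_gt fun hNm => hN (hp hNm.le hm)⟩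
    have hsub : Set.Icc 1 j ⊆ {m | 1 ≤ m ∧ p m} := fun m ⟨h1, hm⟩ => ⟨h1, hp hm hpj⟩
    simpa using Set.ncard_le_ncard hsub hfin

namespace YPartition

theorem durfee_bddAbove (η : YPartition) : BddAbove {i | i ≤ η.part i} :=
  ⟨η.part 1, fun i hi => by
    rcases i.eq_zero_or_pos with rfl | h1
    · exact Nat.zero_le _
    · exact hi.trans (η.antitone h1)⟩

theorem durfee_le_part (η : YPartition) : η.durfee ≤ η.part η.durfee :=
  Nat.sSup_mem (s := {i | i ≤ η.part i}) ⟨0, Nat.zero_le _⟩ η.durfee_bddAbove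

theorem le_durfee {η : YPartition} {i : ℕ} (hi : i ≤ η.part i) : i ≤ η.durfee :=
  le_csSup η.durfee_bddAbove hi

namespace IsConj

variable {η ηc : YPartition}

theorem le_part_iff (h : η.IsConj ηc) {i j : ℕ} (hi : 1 ≤ i) (hj : 1 ≤ j) :
    j ≤ ηc.part i ↔ i ≤ η.part j := by
  obtain ⟨N, hN⟩ := η.exists_zero
  rw [h i hi]
  have hanti : Antitone fun m => i ≤ η.part m := fun _ _ hmn hm => hm.trans (η.antitone hmn)
  exact le_ncard_setOf_iff_of_antitone hanti (by omega : ¬ i ≤ η.part N) hj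

theorem part_eq_of_isConj {ηcc : YPartition} (h : η.IsConj ηc) (h' : ηc.IsConj ηcc) :
    ηcc.part = η.part := by
  have hpos : ∀ j, 1 ≤ j → ηcc.part j = η.part j := fun j hj =>
    eq_of_forall_le_iff fun i => by
      rcases i.eq_zero_or_pos with rfl | hi
      · simp
      · rw [h'.le_part_iff hj hi, h.le_part_iff hi hj]
  funext j
  rcases j.eq_zero_or_pos with rfl | hj
  · rw [ηcc.head, η.head, hpos 1 le_rfl]
  · exact hpos j hj

theorem durfee_eq (h : η.IsConj ηc) : ηc.durfee = η.durfee := by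
  unfold durfee
  congr 1
  ext i
  rcases i.eq_zero_or_pos with rfl | hi
  · simp
  · exact h.le_part_iff hi hi

/-- For empty `η` both sides are `0`: then `d̃(η′) = sSup ℕ`, which is `0` by convention. -/
theorem dtil_eq (h : η.IsConj ηc) : ηc.dtil = η.part η.durfee := by
  unfold dtil
  rw [h.durfee_eq]
  rcases (η.part 1).eq_zero_or_pos with hempty | hne
  · have hd0 : η.durfee = 0 := by
      have := η.durfee_le_part.trans (η.antitone (Nat.zero_le η.durfee))
      rw [η.head, hempty] at this
      omega
    simp only [hd0, η.head, hempty, zero_le, Set.ofPred_true]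
    rw [csSup_of_not_bddAbove not_bddAbove_univ, csSup_empty]
    rfl
  · have hd : 1 ≤ η.durfee := le_durfee hne
    have hset : {i | η.durfee ≤ ηc.part i} = Set.Iic (η.part η.durfee) := by
      ext i
      rcases i.eq_zero_or_pos with rfl | hi
      · simpa [ηc.head, h.le_part_iff le_rfl hd] using hd.trans η.durfee_le_part
      · exact h.le_part_iff hi hd
    rw [hset, csSup_Iic]

end IsConj

end YPartition

theorem K2_eq_conj_K3_general (lamc mu muc mucc nu nuc : YPartition)
    (h2 : mu.IsConj muc) (h3 : muc.IsConj mucc)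
    (h4 : nu.IsConj nuc) (k : ℤ) :
    K2 lamc mu nu k = K3 mucc lamc nuc (-k) := by
  have hpart : mucc.part = mu.part := h2.part_eq_of_isConj h3
  have hlen : mucc.len = mu.len := by simp only [YPartition.len, hpart]
  have hdtil : nuc.dtil - nuc.durfee = nu.part nu.durfee - nu.durfee := by
    rw [h4.dtil_eq, h4.durfee_eq]
  simp only [K2, K3, hlen, hpart, hdtil]
  simp only [neg_eq_iff_eq_neg, sub_eq_neg_add, neg_add_rev, neg_neg]

/-- For nonempty `λ, μ` and any `ν`: `q^{K₂(λ,μ,ν)} = conj(q^{K₃(μ′,λ′,ν′)})`,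
where `conj` is `q_k ↦ q_{−k}` (i.e. exponents satisfy `K₂(λ,μ,ν)(k) = K₃(μ′,λ′,ν′)(−k)`).
Here `mucc = (μ′)′` is the `λ′`-datum of `K₃(μ′,λ′,ν′)`. -/
theorem K2_eq_conj_K3 (lam lamc mu muc mucc nu nuc : YPartition)
    (hlam : lam.part 1 ≠ 0) (hmu : mu.part 1 ≠ 0)
    (h1 : lam.IsConj lamc) (h2 : mu.IsConj muc) (h3 : muc.IsConj mucc)
    (h4 : nu.IsConj nuc) (k : ℤ) :
    K2 lamc mu nu k = K3 mucc lamc nuc (-k) :=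
  K2_eq_conj_K3_general lamc mu muc mucc nu nuc h2 h3 h4 k
end
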